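/- Define the Burling graph sequence abstractly: G_1 is a single vertex with one distinguished 'probe' (the singleton set of its vertex). Given G_k with a family P_k of probes (independent sets of vertices), construct G_{k+1} as follows: take one copy G of G_k with probes P, and for each probe P ∈ P attach a fresh copy G_P of G_k with probes Q_P; for each P ∈ P and each Q ∈ Q_P, add a new vertex d_{P,Q} adjacent exactly to the vertices of Q (inside G_P). The probes of G_{k+1} are, for each such pair (P,Q): the lower probe P ∪ Q and the upper probe P ∪ {d_{P,Q}}. Then G_{k+1} is triangle-free whenever G_k is triangle-free and every probe of G_k is an independent set. -/
import Mathlib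


/-- Probe index type for the Burling construction: level `n` corresponds to the graph
`G_{n+1}` of the paper. A probe of level `n + 1` is given by a probe `P` of the outer
copy, a probe `Q` of the inner copy placed in `P`, and a Boolean flag (`false` = lower
probe `P ∪ Q`, `true` = upper probe `P ∪ {d_{P,Q}}`). -/
def BurlingProbeIdx : ℕ → Type
  | 0 => Unit
  | n + 1 => BurlingProbeIdx n × BurlingProbeIdx n × Bool

/-- Vertex type of the Burling graph of level `n` (the graph `G_{n+1}` of the paper):
level `n + 1` consists of an outer copy of level `n`, an inner copy of level `n` for
each probe `P`, and a diagonal vertex `d_{P,Q}` for each probe `P` of the outer copy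
and each probe `Q` of the inner copy attached to `P`. -/
def BurlingVertex : ℕ → Type
  | 0 => Unit
  | n + 1 =>
      BurlingVertex n ⊕
        (BurlingProbeIdx n × BurlingVertex n) ⊕
        (BurlingProbeIdx n × BurlingProbeIdx n)

instance instFintypeBurlingProbeIdx : ∀ n, Fintype (BurlingProbeIdx n)
  | 0 => inferInstanceAs (Fintype Unit)
  | n + 1 =>
      letI := instFintypeBurlingProbeIdx n
      inferInstanceAs (Fintype (BurlingProbeIdx n × BurlingProbeIdx n × Bool))

instance instFintypeBurlingVertex : ∀ n, Fintype (BurlingVertex n)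
  | 0 => inferInstanceAs (Fintype Unit)
  | n + 1 =>
      letI := instFintypeBurlingVertex n
      inferInstanceAs (Fintype (BurlingVertex n ⊕
        (BurlingProbeIdx n × BurlingVertex n) ⊕
        (BurlingProbeIdx n × BurlingProbeIdx n)))

/-- The set of vertices pierced by a probe in the Burling construction. -/
def burlingProbe : (n : ℕ) → BurlingProbeIdx n → Set (BurlingVertex n)
  | 0, _ => Set.univ
  | n + 1, ⟨P, Q, b⟩ =>
      (Sum.inl '' burlingProbe n P) ∪
        (if b then {Sum.inr (Sum.inr (P, Q))}
         else (fun v => Sum.inr (Sum.inl (P, v))) '' burlingProbe n Q)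

/-- One-directional adjacency relation generating the Burling graph of level `n`. -/
def burlingRel : (n : ℕ) → BurlingVertex n → BurlingVertex n → Prop
  | 0, _, _ => False
  | n + 1, x, y =>
      match x, y with
      | Sum.inl u, Sum.inl v => burlingRel n u v
      | Sum.inr (Sum.inl (P, u)), Sum.inr (Sum.inl (P', v)) => P = P' ∧ burlingRel n u v
      | Sum.inr (Sum.inr (P, Q)), Sum.inr (Sum.inl (P', v)) => P = P' ∧ v ∈ burlingProbe n Q
      | _, _ => False

/-- The Burling graph of level `n` (the graph `G_{n+1}` of the paper). -/
def BurlingGraph (n : ℕ) : SimpleGraph (BurlingVertex n) :=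
  SimpleGraph.fromRel (burlingRel n)

section helpers
variable {n : ℕ}

lemma adj_inl_inl {u v : BurlingVertex n} :
    (BurlingGraph (n+1)).Adj (Sum.inl u) (Sum.inl v) ↔ (BurlingGraph n).Adj u v := by
  constructor
  · rintro ⟨hne, h⟩
    exact ⟨fun e => hne (congrArg Sum.inl e), h⟩
  · rintro ⟨hne, h⟩
    exact ⟨fun e => hne (Sum.inl_injective e), h⟩

lemma adj_copy_copy {P P' : BurlingProbeIdx n} {u v : BurlingVertex n} :
    (BurlingGraph (n+1)).Adj (Sum.inr (Sum.inl (P, u))) (Sum.inr (Sum.inl (P', v))) ↔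
      P = P' ∧ (BurlingGraph n).Adj u v := by
  constructor
  · rintro ⟨hne, ⟨rfl, h⟩ | ⟨rfl, h⟩⟩
    · exact ⟨rfl, fun e => hne (by rw [e]), Or.inl h⟩
    · exact ⟨rfl, fun e => hne (by rw [e]), Or.inr h⟩
  · rintro ⟨rfl, hne, h | h⟩
    · exact ⟨fun e => hne (congrArg Prod.snd (Sum.inl_injective (Sum.inr_injective e))),
        Or.inl ⟨rfl, h⟩⟩
    · exact ⟨fun e => hne (congrArg Prod.snd (Sum.inl_injective (Sum.inr_injective e))),
        Or.inr ⟨rfl, h⟩⟩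

lemma adj_diag_copy {P P' Q : BurlingProbeIdx n} {v : BurlingVertex n} :
    (BurlingGraph (n+1)).Adj (Sum.inr (Sum.inr (P, Q))) (Sum.inr (Sum.inl (P', v))) ↔
      P = P' ∧ v ∈ burlingProbe n Q := by
  constructor
  · rintro ⟨hne, h | h⟩
    · obtain ⟨rfl, h⟩ := h
      exact ⟨rfl, h⟩
    · exact h.elim
  · rintro ⟨rfl, h⟩
    exact ⟨fun e => Sum.inr_ne_inl (Sum.inr_injective e), Or.inl ⟨rfl, h⟩⟩

lemma not_adj_inl_copy {u : BurlingVertex n} {P : BurlingProbeIdx n} {v : BurlingVertex n} :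
    ¬ (BurlingGraph (n+1)).Adj (Sum.inl u) (Sum.inr (Sum.inl (P, v))) := by
  rintro ⟨-, h | h⟩ <;> exact h

lemma not_adj_inl_diag {u : BurlingVertex n} {P Q : BurlingProbeIdx n} :
    ¬ (BurlingGraph (n+1)).Adj (Sum.inl u) (Sum.inr (Sum.inr (P, Q))) := by
  rintro ⟨-, h | h⟩ <;> exact h

lemma not_adj_diag_diag {P Q P' Q' : BurlingProbeIdx n} :
    ¬ (BurlingGraph (n+1)).Adj (Sum.inr (Sum.inr (P, Q))) (Sum.inr (Sum.inr (P', Q'))) := by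
  rintro ⟨-, h | h⟩ <;> exact h

end helpers

/-- In the Burling construction, `G_{k+1}` is triangle-free whenever `G_k` is
triangle-free and every probe of `G_k` is an independent set. (Level `n` here is the
graph `G_{n+1}` of the paper.) -/
theorem burlingGraph_succ_triangleFree (n : ℕ)
    (htf : (BurlingGraph n).CliqueFree 3)
    (hind : ∀ i : BurlingProbeIdx n, ∀ u ∈ burlingProbe n i, ∀ v ∈ burlingProbe n i,
      ¬ (BurlingGraph n).Adj u v) :
    (BurlingGraph (n + 1)).CliqueFree 3 := by
  classical
  intro t ht
  rw [SimpleGraph.is3Clique_iff] at ht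
  obtain ⟨a, b, c, hab, hac, hbc, -⟩ := ht
  have htri : ∀ x y z : BurlingVertex n, (BurlingGraph n).Adj x y →
      (BurlingGraph n).Adj x z → (BurlingGraph n).Adj y z → False := fun x y z h1 h2 h3 =>
    htf {x, y, z} (SimpleGraph.is3Clique_triple_iff.mpr ⟨h1, h2, h3⟩)
  rcases a with u | ⟨P, u⟩ | ⟨P, Q⟩ <;> rcases b with v | ⟨P', v⟩ | ⟨P', Q'⟩ <;>
      rcases c with w | ⟨P'', w⟩ | ⟨P'', Q''⟩ <;>
    first
      | exact not_adj_inl_copy hab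
      | exact not_adj_inl_copy hab.symm
      | exact not_adj_inl_diag hab
      | exact not_adj_inl_diag hab.symm
      | exact not_adj_inl_copy hac
      | exact not_adj_inl_copy hac.symm
      | exact not_adj_inl_diag hac
      | exact not_adj_inl_diag hac.symm
      | exact not_adj_inl_copy hbc
      | exact not_adj_inl_copy hbc.symm
      | exact not_adj_inl_diag hbc
      | exact not_adj_inl_diag hbc.symm
      | exact not_adj_diag_diag hab
      | exact not_adj_diag_diag hab.symm
      | exact not_adj_diag_diag hac
      | exact not_adj_diag_diag hac.symm
      | exact not_adj_diag_diag hbc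
      | exact not_adj_diag_diag hbc.symm
      | exact htri _ _ _ (adj_inl_inl.mp hab) (adj_inl_inl.mp hac) (adj_inl_inl.mp hbc)
      | exact htri _ _ _ (adj_copy_copy.mp hab).2 (adj_copy_copy.mp hac).2 (adj_copy_copy.mp hbc).2
      | exact hind Q _ (adj_diag_copy.mp hab).2 _ (adj_diag_copy.mp hac).2
          (adj_copy_copy.mp hbc).2
      | exact hind Q' _ (adj_diag_copy.mp hab.symm).2 _ (adj_diag_copy.mp hbc).2
          (adj_copy_copy.mp hac).2
      | exact hind Q'' _ (adj_diag_copy.mp hac.symm).2 _ (adj_diag_copy.mp hbc.symm).2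
          (adj_copy_copy.mp hab).2
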